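/- Let s be a natural number with s > 1, and let f : ℝ → ℝ be 2s times differentiable on [0,1] such that f(0) = f'(0) = ⋯ = f^{(2s−1)}(0) = 0, f(1) = f'(1) = ⋯ = f^{(2s−2)}(1) = 0, and the 2s-th derivative f^{(2s)} is bounded on [0,1]. Then there exists a constant C > 0 such that for every λ > 0 with J₀(λ) = 0, the Fourier-Bessel coefficient c(λ) := (2 / J₁(λ)²) · ∫_0^1 f(x) J₀(λx) x dx satisfies |c(λ)| ≤ C / λ^{2s − 1/2}. -/

import Mathlib

set_option maxHeartbeats 1000000

open Real MeasureTheory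

/-- The Bessel function of the first kind of order `0`, defined by its power series. -/
noncomputable def J0 (x : ℝ) : ℝ :=
  ∑' k : ℕ, (-1 : ℝ) ^ k * (x / 2) ^ (2 * k) / ((Nat.factorial k : ℝ) ^ 2)

/-- The Bessel function of the first kind of order `1`, defined by its power series. -/
noncomputable def J1 (x : ℝ) : ℝ :=
  ∑' k : ℕ, (-1 : ℝ) ^ k * (x / 2) ^ (2 * k + 1) /
    ((Nat.factorial k : ℝ) * (Nat.factorial (k + 1) : ℝ))


namespace Bessel

noncomputable def t0 (k : ℕ) (x : ℝ) : ℝ :=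
  (-1 : ℝ) ^ k * (x / 2) ^ (2 * k) / ((Nat.factorial k : ℝ) ^ 2)

noncomputable def t1 (k : ℕ) (x : ℝ) : ℝ :=
  (-1 : ℝ) ^ k * (x / 2) ^ (2 * k + 1) /
    ((Nat.factorial k : ℝ) * (Nat.factorial (k + 1) : ℝ))

noncomputable def d1 (k : ℕ) (x : ℝ) : ℝ :=
  (-1 : ℝ) ^ k * ((2 * k + 1) * (x / 2) ^ (2 * k)) /
    (2 * ((Nat.factorial k : ℝ) * (Nat.factorial (k + 1) : ℝ)))

noncomputable def J1d (x : ℝ) : ℝ := ∑' k : ℕ, d1 k x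

lemma fact_pos (k : ℕ) : (0:ℝ) < (Nat.factorial k : ℝ) := by
  exact_mod_cast Nat.factorial_pos k

lemma fact_one_le (k : ℕ) : (1:ℝ) ≤ (Nat.factorial k : ℝ) := by
  exact_mod_cast Nat.one_le_iff_ne_zero.mpr (Nat.factorial_pos k).ne'


lemma abs_half_pow (k : ℕ) (x : ℝ) : |x / 2| ^ (2 * k) = (x ^ 2 / 4) ^ k := by
  rw [pow_mul]
  congr 1
  rw [sq_abs]
  ring

lemma abs_t0_le (k : ℕ) (x : ℝ) : |t0 k x| ≤ (x ^ 2 / 4) ^ k / (Nat.factorial k : ℝ) := by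
  have h1 : |t0 k x| = (x ^ 2 / 4) ^ k / ((Nat.factorial k : ℝ) ^ 2) := by
    rw [t0, abs_div, abs_mul, abs_pow, abs_pow, abs_neg, abs_one, one_pow, one_mul,
      abs_half_pow, abs_of_pos (by positivity : (0:ℝ) < (Nat.factorial k : ℝ) ^ 2)]
  rw [h1]
  apply div_le_div_of_nonneg_left (by positivity) (fact_pos k)
  calc (Nat.factorial k : ℝ) = (Nat.factorial k : ℝ) * 1 := by ring
    _ ≤ (Nat.factorial k : ℝ) ^ 2 := by
        rw [sq]; exact mul_le_mul_of_nonneg_left (fact_one_le k) (fact_pos k).le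

lemma summable_abs_t0 (x : ℝ) : Summable fun k => |t0 k x| := by
  apply Summable.of_nonneg_of_le (fun k => abs_nonneg _) (fun k => abs_t0_le k x)
  exact Real.summable_pow_div_factorial _

lemma summable_t0 (x : ℝ) : Summable fun k => t0 k x :=
  (summable_abs_t0 x).of_abs

lemma abs_t1_le (k : ℕ) (x : ℝ) :
    |t1 k x| ≤ (|x| / 2) * ((x ^ 2 / 4) ^ k / (Nat.factorial k : ℝ)) := by
  have h2 : |(x / 2) ^ (2 * k + 1)| = (x ^ 2 / 4) ^ k * (|x| / 2) := by
    rw [abs_pow, pow_succ, abs_half_pow]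
    congr 1
    rw [abs_div]; norm_num
  have h1 : |t1 k x| = (|x| / 2) * (x ^ 2 / 4) ^ k /
      ((Nat.factorial k : ℝ) * (Nat.factorial (k + 1) : ℝ)) := by
    rw [t1, abs_div, abs_mul, abs_pow, abs_neg, abs_one, one_pow, one_mul, h2,
      abs_of_pos (by positivity : (0:ℝ) < (Nat.factorial k : ℝ) * (Nat.factorial (k+1) : ℝ))]
    ring
  rw [h1]
  rw [div_le_iff₀ (by positivity), mul_comm ((Nat.factorial k : ℝ)) _]
  calc (|x| / 2) * (x ^ 2 / 4) ^ k
      = ((|x| / 2) * ((x ^ 2 / 4) ^ k / (Nat.factorial k : ℝ))) * (Nat.factorial k : ℝ) * 1 := by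
        field_simp
    _ ≤ ((|x| / 2) * ((x ^ 2 / 4) ^ k / (Nat.factorial k : ℝ))) * (Nat.factorial k : ℝ) *
          (Nat.factorial (k+1) : ℝ) := by
        apply mul_le_mul_of_nonneg_left (fact_one_le _) (by positivity)
    _ = (|x| / 2) * ((x ^ 2 / 4) ^ k / (Nat.factorial k : ℝ)) *
          ((Nat.factorial (k+1) : ℝ) * (Nat.factorial k : ℝ)) := by field_simp

lemma summable_abs_t1 (x : ℝ) : Summable fun k => |t1 k x| := by
  apply Summable.of_nonneg_of_le (fun k => abs_nonneg _) (fun k => abs_t1_le k x)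
  exact ((Real.summable_pow_div_factorial _).mul_left _)

lemma summable_t1 (x : ℝ) : Summable fun k => t1 k x :=
  (summable_abs_t1 x).of_abs

lemma abs_d1_le (k : ℕ) (x : ℝ) : |d1 k x| ≤ (x ^ 2 / 4) ^ k / (Nat.factorial k : ℝ) := by
  have h1 : |d1 k x| = ((2 * k + 1) * (x ^ 2 / 4) ^ k) /
      (2 * ((Nat.factorial k : ℝ) * (Nat.factorial (k + 1) : ℝ))) := by
    rw [d1, abs_div, abs_mul, abs_mul, abs_pow, abs_neg, abs_one, one_pow, one_mul, abs_pow,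
      abs_half_pow,
      abs_of_pos (by positivity : (0:ℝ) < 2 * ((Nat.factorial k : ℝ) * (Nat.factorial (k+1) : ℝ)))]
    congr 2
    rw [abs_of_nonneg (by positivity : (0:ℝ) ≤ 2 * (k:ℝ) + 1)]
  rw [h1, div_le_div_iff₀ (by positivity) (fact_pos k)]
  have hk1 : (2 * (k:ℝ) + 1) ≤ 2 * (Nat.factorial (k+1) : ℝ) := by
    have : ((k:ℝ) + 1) ≤ (Nat.factorial (k+1) : ℝ) := by
      exact_mod_cast Nat.self_le_factorial (k+1)
    nlinarith
  have hpow : (0:ℝ) ≤ (x ^ 2 / 4) ^ k := by positivity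
  calc (2 * (k:ℝ) + 1) * (x ^ 2 / 4) ^ k * (Nat.factorial k : ℝ)
      ≤ 2 * (Nat.factorial (k+1) : ℝ) * (x ^ 2 / 4) ^ k * (Nat.factorial k : ℝ) := by
        apply mul_le_mul_of_nonneg_right (mul_le_mul_of_nonneg_right hk1 hpow) (fact_pos k).le
    _ = (x ^ 2 / 4) ^ k * (2 * ((Nat.factorial k : ℝ) * (Nat.factorial (k+1) : ℝ))) := by ring

lemma summable_abs_d1 (x : ℝ) : Summable fun k => |d1 k x| := by
  apply Summable.of_nonneg_of_le (fun k => abs_nonneg _) (fun k => abs_d1_le k x)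
  exact Real.summable_pow_div_factorial _

lemma summable_d1 (x : ℝ) : Summable fun k => d1 k x :=
  (summable_abs_d1 x).of_abs


noncomputable def d0 : ℕ → ℝ → ℝ
  | 0 => fun _ => 0
  | (k+1) => fun x => -(t1 k x)

lemma hasDerivAt_t0 (k : ℕ) (x : ℝ) : HasDerivAt (t0 k) (d0 k x) x := by
  cases k with
  | zero =>
      have h : t0 0 = fun _ : ℝ => 1 := by
        funext y; simp [t0]
      rw [h]
      exact hasDerivAt_const x 1
  | succ k =>
      have hbase : HasDerivAt (fun y : ℝ => (y / 2) ^ (2 * (k+1)))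
          ((2 * (k+1) : ℕ) * (x / 2) ^ (2 * (k+1) - 1) * (1/2)) x := by
        have h2 : HasDerivAt (fun y : ℝ => y / 2) (1/2) x := (hasDerivAt_id x).div_const 2
        exact h2.pow _
      have h3 := (hbase.const_mul ((-1:ℝ) ^ (k+1))).div_const ((Nat.factorial (k+1) : ℝ) ^ 2)
      have hval : d0 (k+1) x
          = (-1:ℝ) ^ (k+1) * ((2 * (k+1) : ℕ) * (x / 2) ^ (2 * (k+1) - 1) * (1/2)) /
            ((Nat.factorial (k+1) : ℝ) ^ 2) := by
        show -(t1 k x) = _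
        have hfact : ((Nat.factorial (k+1) : ℝ)) = (k+1) * (Nat.factorial k : ℝ) := by
          exact_mod_cast Nat.factorial_succ k
        have hexp : 2 * (k+1) - 1 = 2 * k + 1 := by omega
        rw [hexp, t1]
        have hne : (Nat.factorial k : ℝ) ≠ 0 := (fact_pos k).ne'
        have hne1 : (Nat.factorial (k+1) : ℝ) ≠ 0 := (fact_pos (k+1)).ne'
        field_simp
        rw [hfact]
        push_cast
        ring
      rw [hval]
      exact h3

lemma hasDerivAt_t1 (k : ℕ) (x : ℝ) : HasDerivAt (t1 k) (d1 k x) x := by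
  have hbase : HasDerivAt (fun y : ℝ => (y / 2) ^ (2 * k + 1))
      ((2 * k + 1 : ℕ) * (x / 2) ^ (2 * k + 1 - 1) * (1/2)) x := by
    have h2 : HasDerivAt (fun y : ℝ => y / 2) (1/2) x := (hasDerivAt_id x).div_const 2
    exact h2.pow _
  have h3 := (hbase.const_mul ((-1:ℝ) ^ k)).div_const
      ((Nat.factorial k : ℝ) * (Nat.factorial (k+1) : ℝ))
  have hval : d1 k x
      = (-1:ℝ) ^ k * ((2 * k + 1 : ℕ) * (x / 2) ^ (2 * k + 1 - 1) * (1/2)) /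
        ((Nat.factorial k : ℝ) * (Nat.factorial (k+1) : ℝ)) := by
    have hexp : 2 * k + 1 - 1 = 2 * k := by omega
    rw [d1, hexp]
    push_cast
    ring
  rw [hval]
  exact h3

lemma hasDerivAt_J0 (x : ℝ) : HasDerivAt J0 (-(J1 x)) x := by
  set R := |x| + 1 with hR
  have hR0 : (0:ℝ) < R := by positivity
  have key : HasDerivAt (fun z => ∑' n, t0 n z) (∑' n, d0 n x) x := by
    apply hasDerivAt_tsum_of_isPreconnected
      (u := fun k => Nat.rec (motive := fun _ => ℝ) 0
        (fun k _ => (R/2) * ((R^2/4)^k / (Nat.factorial k : ℝ))) k)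
      (t := Metric.ball (0:ℝ) R) ?_ Metric.isOpen_ball (convex_ball _ _).isPreconnected
      (fun n y _ => hasDerivAt_t0 n y) ?_ (Metric.mem_ball_self hR0) (summable_t0 0) ?_
    · rw [← summable_nat_add_iff 1]
      exact ((Real.summable_pow_div_factorial (R^2/4)).mul_left (R/2))
    · intro n y hy
      cases n with
      | zero => simp [d0]
      | succ k =>
          show ‖-(t1 k y)‖ ≤ (R/2) * ((R^2/4)^k / (Nat.factorial k : ℝ))
          rw [norm_neg, Real.norm_eq_abs]
          refine le_trans (abs_t1_le k y) ?_
          have hyR : |y| ≤ R := by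
            have := mem_ball_zero_iff.mp hy
            rw [Real.norm_eq_abs] at this
            linarith
          have hy2 : y^2 ≤ R^2 := by nlinarith [abs_nonneg y, sq_abs y, sq_abs R]
          gcongr
    · simp only [Metric.mem_ball, Real.dist_eq, sub_zero]
      linarith [abs_nonneg x]
  have hsum : Summable fun n => d0 n x := by
    apply (summable_nat_add_iff 1).mp
    show Summable fun n => -(t1 n x)
    exact (summable_t1 x).neg
  have hval : (∑' n, d0 n x) = -(J1 x) := by
    rw [Summable.tsum_eq_zero_add hsum]
    show (0:ℝ) + (∑' n, -(t1 n x)) = -(J1 x)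
    rw [tsum_neg, zero_add, J1]
    rfl
  rw [← hval]
  exact key

lemma hasDerivAt_J1 (x : ℝ) : HasDerivAt J1 (J1d x) x := by
  set R := |x| + 1 with hR
  have hR0 : (0:ℝ) < R := by positivity
  have key : HasDerivAt (fun z => ∑' n, t1 n z) (∑' n, d1 n x) x := by
    apply hasDerivAt_tsum_of_isPreconnected
      (u := fun k => (R^2/4)^k / (Nat.factorial k : ℝ))
      (t := Metric.ball (0:ℝ) R) ?_ Metric.isOpen_ball (convex_ball _ _).isPreconnected
      (fun n y _ => hasDerivAt_t1 n y) ?_ (Metric.mem_ball_self hR0) (summable_t1 0) ?_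
    · exact Real.summable_pow_div_factorial (R^2/4)
    · intro k y hy
      rw [Real.norm_eq_abs]
      refine le_trans (abs_d1_le k y) ?_
      have hyR : |y| ≤ R := by
        have := mem_ball_zero_iff.mp hy
        rw [Real.norm_eq_abs] at this
        linarith
      have hy2 : y^2 ≤ R^2 := by nlinarith [abs_nonneg y, sq_abs y, sq_abs R]
      exact div_le_div_of_nonneg_right
        (pow_le_pow_left₀ (by positivity) (div_le_div_of_nonneg_right hy2 (by norm_num)) k)
        (fact_pos k).le
    · simp only [Metric.mem_ball, Real.dist_eq, sub_zero]
      linarith [abs_nonneg x]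
  exact key

lemma J1d_identity (x : ℝ) : x * J1d x + J1 x = x * J0 x := by
  have h1 : x * J1d x = ∑' k, x * d1 k x := (tsum_mul_left).symm
  have h2 : x * J0 x = ∑' k, x * t0 k x := (tsum_mul_left).symm
  rw [h1, h2]
  show (∑' k, x * d1 k x) + (∑' k, t1 k x) = _
  rw [← Summable.tsum_add ((summable_d1 x).mul_left x) (summable_t1 x)]
  apply tsum_congr
  intro k
  rw [d1, t1, t0]
  have hne : (Nat.factorial k : ℝ) ≠ 0 := (fact_pos k).ne'
  have hne1 : (Nat.factorial (k+1) : ℝ) ≠ 0 := (fact_pos (k+1)).ne'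
  have hfact : ((Nat.factorial (k+1) : ℝ)) = (k+1) * (Nat.factorial k : ℝ) := by
    exact_mod_cast Nat.factorial_succ k
  rw [pow_succ]
  field_simp
  rw [hfact]
  push_cast
  ring

lemma continuous_J0 : Continuous J0 := by
  have h : Differentiable ℝ J0 := fun x => (hasDerivAt_J0 x).differentiableAt
  exact h.continuous

lemma continuous_J1 : Continuous J1 := by
  have h : Differentiable ℝ J1 := fun x => (hasDerivAt_J1 x).differentiableAt
  exact h.continuous


lemma tsum_quarter : ∑' k : ℕ, (1/4:ℝ)^k = 4/3 := by
  rw [tsum_geometric_of_lt_one (by norm_num) (by norm_num)]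
  norm_num

lemma summable_quarter : Summable fun k : ℕ => (1/4:ℝ)^k :=
  summable_geometric_of_lt_one (by norm_num) (by norm_num)

lemma abs_t0_le_quarter (k : ℕ) (x : ℝ) (hx : |x| ≤ 1) : |t0 k x| ≤ (1/4:ℝ)^k := by
  refine le_trans (abs_t0_le k x) ?_
  have hx2 : x^2 ≤ 1 := by nlinarith [abs_nonneg x, sq_abs x]
  calc (x^2/4)^k / (Nat.factorial k : ℝ) ≤ (x^2/4)^k := by
        apply div_le_self (by positivity) (fact_one_le k)
    _ ≤ (1/4:ℝ)^k := pow_le_pow_left₀ (by positivity) (by linarith) k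

lemma abs_t1_le_quarter (k : ℕ) (x : ℝ) (hx : |x| ≤ 1) : |t1 k x| ≤ (1/2) * (1/4:ℝ)^k := by
  refine le_trans (abs_t1_le k x) ?_
  have hx2 : x^2 ≤ 1 := by nlinarith [abs_nonneg x, sq_abs x]
  have h1 : (x^2/4)^k / (Nat.factorial k : ℝ) ≤ (1/4:ℝ)^k := by
    calc (x^2/4)^k / (Nat.factorial k : ℝ) ≤ (x^2/4)^k := by
          apply div_le_self (by positivity) (fact_one_le k)
      _ ≤ (1/4:ℝ)^k := pow_le_pow_left₀ (by positivity) (by linarith) k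
  have h2 : |x|/2 ≤ 1/2 := by linarith
  have h3 : (0:ℝ) ≤ (x^2/4)^k / (Nat.factorial k : ℝ) := by positivity
  calc |x|/2 * ((x^2/4)^k / (Nat.factorial k : ℝ)) ≤ (1/2) * ((x^2/4)^k / (Nat.factorial k : ℝ)) :=
        mul_le_mul_of_nonneg_right h2 h3
    _ ≤ (1/2) * (1/4:ℝ)^k := by linarith

lemma abs_J0_le (x : ℝ) (hx : |x| ≤ 1) : |J0 x| ≤ 4/3 := by
  have h0 : J0 x = ∑' k, t0 k x := rfl
  rw [h0]
  calc |∑' k, t0 k x| ≤ ∑' k, |t0 k x| := by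
        simpa using norm_tsum_le_tsum_norm (f := fun k => t0 k x) (by simpa using summable_abs_t0 x)
    _ ≤ ∑' k : ℕ, (1/4:ℝ)^k :=
        Summable.tsum_le_tsum (fun k => abs_t0_le_quarter k x hx) (summable_abs_t0 x) summable_quarter
    _ = 4/3 := tsum_quarter

lemma abs_J1_le (x : ℝ) (hx : |x| ≤ 1) : |J1 x| ≤ 2/3 := by
  have h0 : J1 x = ∑' k, t1 k x := rfl
  rw [h0]
  calc |∑' k, t1 k x| ≤ ∑' k, |t1 k x| := by
        simpa using norm_tsum_le_tsum_norm (f := fun k => t1 k x) (by simpa using summable_abs_t1 x)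
    _ ≤ ∑' k : ℕ, (1/2) * (1/4:ℝ)^k :=
        Summable.tsum_le_tsum (fun k => abs_t1_le_quarter k x hx) (summable_abs_t1 x)
          (summable_quarter.mul_left _)
    _ = (1/2) * (4/3) := by rw [tsum_mul_left, tsum_quarter]
    _ ≤ 2/3 := by norm_num

lemma J0_lower (x : ℝ) (hx : |x| ≤ 1) : 2/3 ≤ J0 x := by
  have h0 : J0 x = ∑' k, t0 k x := rfl
  have hsplit : (∑' k, t0 k x) = t0 0 x + ∑' k, t0 (k+1) x := Summable.tsum_eq_zero_add (summable_t0 x)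
  have ht00 : t0 0 x = 1 := by simp [t0]
  have hsummable : Summable fun k => |t0 (k+1) x| := by
    exact (summable_nat_add_iff 1).mpr (summable_abs_t0 x)
  have habs : |∑' k, t0 (k+1) x| ≤ 1/3 := by
    calc |∑' k, t0 (k+1) x| ≤ ∑' k, |t0 (k+1) x| := by
          simpa using norm_tsum_le_tsum_norm (f := fun k => t0 (k+1) x) (by simpa using hsummable)
      _ ≤ ∑' k : ℕ, (1/4:ℝ)^(k+1) := by
          refine Summable.tsum_le_tsum (fun k => abs_t0_le_quarter (k+1) x hx) hsummable ?_
          exact (summable_nat_add_iff 1).mpr summable_quarter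
      _ = (1/4) * ∑' k : ℕ, (1/4:ℝ)^k := by
          rw [← tsum_mul_left]
          apply tsum_congr; intro k; ring
      _ = 1/3 := by rw [tsum_quarter]; norm_num
  rw [h0, hsplit, ht00]
  have := abs_le.mp habs
  linarith [this.1]

noncomputable def W (x : ℝ) : ℝ := Real.sqrt x * J0 x
noncomputable def V (x : ℝ) : ℝ := J0 x / (2 * Real.sqrt x) - Real.sqrt x * J1 x

lemma hasDerivAt_W (x : ℝ) (hx : 0 < x) : HasDerivAt W (V x) x := by
  have hs := Real.hasDerivAt_sqrt hx.ne'
  have h := hs.fun_mul (hasDerivAt_J0 x)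
  refine h.congr_deriv ?_
  symm
  have hsne : Real.sqrt x ≠ 0 := (Real.sqrt_pos.mpr hx).ne'
  rw [V]
  field_simp
  ring

lemma hasDerivAt_V (x : ℝ) (hx : 0 < x) :
    HasDerivAt V (-((1 + 1/(4*x^2)) * W x)) x := by
  have hs := Real.hasDerivAt_sqrt hx.ne'
  have hsne : Real.sqrt x ≠ 0 := (Real.sqrt_pos.mpr hx).ne'
  have hsq : Real.sqrt x ^ 2 = x := Real.sq_sqrt hx.le
  have hden : HasDerivAt (fun y => 2 * Real.sqrt y) (2 * (1 / (2 * Real.sqrt x))) x :=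
    hs.const_mul 2
  have h2 : (2 : ℝ) * Real.sqrt x ≠ 0 := by positivity
  have hdiv := (hasDerivAt_J0 x).fun_div hden h2
  have hmul := hs.fun_mul (hasDerivAt_J1 x)
  have h := hdiv.fun_sub hmul
  refine h.congr_deriv ?_
  symm
  have hjd : J1d x = J0 x - J1 x / x := by
    have hid := J1d_identity x
    field_simp
    linarith [hid]
  rw [hjd, W]
  set a := Real.sqrt x with ha
  set j0 := J0 x
  set j1 := J1 x
  have hane : a ≠ 0 := hsne
  rw [← hsq]
  field_simp
  ring

noncomputable def Q (x : ℝ) : ℝ := 1 + 1/(4*x^2)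

lemma Q_pos (x : ℝ) (hx : 0 < x) : 0 < Q x := by rw [Q]; positivity

lemma Q_one_le (x : ℝ) (hx : 0 < x) : 1 ≤ Q x := by
  rw [Q]; have : (0:ℝ) < 1/(4*x^2) := by positivity
  linarith

lemma hasDerivAt_Q (x : ℝ) (hx : 0 < x) : HasDerivAt Q (-(1/(2*x^3))) x := by
  have h1 : HasDerivAt (fun y : ℝ => 4*y^2) (4*(2*x)) x := by
    have := (hasDerivAt_pow 2 x).const_mul (4:ℝ)
    simpa using this
  have h2 := h1.inv (by positivity : (4:ℝ)*x^2 ≠ 0)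
  have h3 := h2.const_add (1:ℝ)
  have hfun : Q = fun y : ℝ => 1 + (4*y^2)⁻¹ := by
    funext y; rw [Q, one_div]
  rw [hfun]
  have hval : -(1/(2*x^3)) = -(4*(2*x))/((4*x^2)^2) := by
    field_simp
    ring
  rw [hval]
  exact h3

noncomputable def Psi (x : ℝ) : ℝ := (V x)^2 / Q x + (W x)^2
noncomputable def Phi (x : ℝ) : ℝ := (V x)^2 + Q x * (W x)^2

lemma hasDerivAt_Psi (x : ℝ) (hx : 0 < x) :
    HasDerivAt Psi ((V x)^2 * (1/(2*x^3)) / (Q x)^2) x := by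
  have hV := hasDerivAt_V x hx
  have hW := hasDerivAt_W x hx
  have hQ := hasDerivAt_Q x hx
  have hV2 : HasDerivAt (fun y => (V y)^2) (2 * V x * -((1 + 1/(4*x^2)) * W x)) x := by
    have := hV.fun_pow 2
    simpa [mul_comm] using this
  have hW2 : HasDerivAt (fun y => (W y)^2) (2 * W x * V x) x := by
    have := hW.fun_pow 2
    simpa [mul_comm] using this
  have h := (hV2.fun_div hQ (Q_pos x hx).ne').fun_add hW2
  refine h.congr_deriv ?_
  symm
  have hqne : Q x ≠ 0 := (Q_pos x hx).ne'
  have hqdef : Q x = 1 + 1/(4*x^2) := rfl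
  rw [← hqdef]
  field_simp
  ring

lemma hasDerivAt_Phi (x : ℝ) (hx : 0 < x) :
    HasDerivAt Phi (-((W x)^2 * (1/(2*x^3)))) x := by
  have hV := hasDerivAt_V x hx
  have hW := hasDerivAt_W x hx
  have hQ := hasDerivAt_Q x hx
  have hV2 : HasDerivAt (fun y => (V y)^2) (2 * V x * -((1 + 1/(4*x^2)) * W x)) x := by
    have := hV.fun_pow 2
    simpa [mul_comm] using this
  have hW2 : HasDerivAt (fun y => (W y)^2) (2 * W x * V x) x := by
    have := hW.fun_pow 2
    simpa [mul_comm] using this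
  have h := hV2.fun_add (hQ.fun_mul hW2)
  refine h.congr_deriv ?_
  symm
  have hqdef : Q x = 1 + 1/(4*x^2) := rfl
  rw [← hqdef]
  field_simp
  ring

lemma Psi_mono : MonotoneOn Psi (Set.Ici (1:ℝ)) := by
  apply monotoneOn_of_deriv_nonneg (convex_Ici 1)
  · intro x hx
    have hx0 : (0:ℝ) < x := lt_of_lt_of_le one_pos hx
    exact (hasDerivAt_Psi x hx0).continuousAt.continuousWithinAt
  · intro x hx
    rw [interior_Ici] at hx
    have hx0 : (0:ℝ) < x := lt_trans one_pos hx
    exact (hasDerivAt_Psi x hx0).differentiableAt.differentiableWithinAt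
  · intro x hx
    rw [interior_Ici] at hx
    have hx0 : (0:ℝ) < x := lt_trans one_pos hx
    rw [(hasDerivAt_Psi x hx0).deriv]
    positivity

lemma Phi_anti : AntitoneOn Phi (Set.Ici (1:ℝ)) := by
  apply antitoneOn_of_deriv_nonpos (convex_Ici 1)
  · intro x hx
    have hx0 : (0:ℝ) < x := lt_of_lt_of_le one_pos hx
    exact (hasDerivAt_Phi x hx0).continuousAt.continuousWithinAt
  · intro x hx
    rw [interior_Ici] at hx
    have hx0 : (0:ℝ) < x := lt_trans one_pos hx
    exact (hasDerivAt_Phi x hx0).differentiableAt.differentiableWithinAt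
  · intro x hx
    rw [interior_Ici] at hx
    have hx0 : (0:ℝ) < x := lt_trans one_pos hx
    rw [(hasDerivAt_Phi x hx0).deriv]
    have : (0:ℝ) ≤ (W x)^2 * (1/(2*x^3)) := by positivity
    linarith

lemma J1_sq_lower (l : ℝ) (hl : 1 < l) (hJ : J0 l = 0) : 4/9 ≤ l * (J1 l)^2 := by
  have hl0 : (0:ℝ) < l := lt_trans one_pos hl
  have h1 : Psi 1 ≤ Psi l := Psi_mono (Set.self_mem_Ici) (Set.mem_Ici.mpr hl.le) hl.le
  have hWl : W l = 0 := by rw [W, hJ, mul_zero]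
  have hVl : (V l)^2 = l * (J1 l)^2 := by
    rw [V, hJ]
    have : Real.sqrt l ^ 2 = l := Real.sq_sqrt hl0.le
    field_simp
    nlinarith [this]
  have hPsil : Psi l ≤ l * (J1 l)^2 := by
    rw [Psi, hWl, hVl]
    have h2 : (0:ℝ) ≤ l * (J1 l)^2 := by positivity
    have := div_le_self h2 (Q_one_le l hl0)
    simpa using this
  have hPsi1 : 4/9 ≤ Psi 1 := by
    rw [Psi]
    have hW1 : W 1 = J0 1 := by rw [W, Real.sqrt_one, one_mul]
    have hJ01 : 2/3 ≤ J0 1 := J0_lower 1 (by rw [abs_one])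
    have h3 : (0:ℝ) ≤ (V 1)^2 / Q 1 := by
      have := Q_pos 1 one_pos
      positivity
    rw [hW1]
    nlinarith [hJ01]
  linarith

lemma sqrt_four : Real.sqrt 4 = 2 := by
  rw [show (4:ℝ) = 2^2 by norm_num, Real.sqrt_sq (by norm_num : (0:ℝ) ≤ 2)]

lemma J0_decay (t : ℝ) (ht : 0 < t) : |J0 t| ≤ 2 / Real.sqrt t := by
  have hst : 0 < Real.sqrt t := Real.sqrt_pos.mpr ht
  rcases le_or_gt t 1 with h | h
  · have h1 : |J0 t| ≤ 4/3 := abs_J0_le t (abs_le.mpr ⟨by linarith, h⟩)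
    have h2 : Real.sqrt t ≤ 1 := by
      rw [show (1:ℝ) = Real.sqrt 1 by rw [Real.sqrt_one]]
      exact Real.sqrt_le_sqrt h
    have h3 : 2 ≤ 2 / Real.sqrt t := by
      rw [le_div_iff₀ hst]
      linarith
    linarith
  · have h1 : Phi t ≤ Phi 1 := Phi_anti (Set.self_mem_Ici) (Set.mem_Ici.mpr h.le) h.le
    have ht0 : (0:ℝ) < t := ht
    have hWt : (W t)^2 = t * (J0 t)^2 := by
      rw [W, mul_pow, Real.sq_sqrt ht.le]
    have hmain : t * (J0 t)^2 ≤ Phi t := by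
      rw [Phi, ← hWt]
      have h2 : (0:ℝ) ≤ (V t)^2 := sq_nonneg _
      have h3 : (W t)^2 ≤ Q t * (W t)^2 := by
        nlinarith [Q_one_le t ht0, sq_nonneg (W t)]
      linarith
    have hPhi1 : Phi 1 ≤ 4 := by
      rw [Phi]
      have hV1 : V 1 = J0 1 / 2 - J1 1 := by
        rw [V, Real.sqrt_one]; ring_nf
      have hW1 : W 1 = J0 1 := by rw [W, Real.sqrt_one, one_mul]
      have hQ1 : Q 1 = 5/4 := by rw [Q]; norm_num
      have hJ0 := abs_le.mp (abs_J0_le 1 (by rw [abs_one]))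
      have hJ1 := abs_le.mp (abs_J1_le 1 (by rw [abs_one]))
      rw [hV1, hW1, hQ1]
      nlinarith [hJ0.1, hJ0.2, hJ1.1, hJ1.2]
    have hsq : (J0 t)^2 ≤ 4 / t := by
      rw [le_div_iff₀ ht0]
      nlinarith
    calc |J0 t| = Real.sqrt ((J0 t)^2) := (Real.sqrt_sq_eq_abs _).symm
      _ ≤ Real.sqrt (4 / t) := Real.sqrt_le_sqrt hsq
      _ = 2 / Real.sqrt t := by
          rw [show (4:ℝ)/t = 4 * t⁻¹ by ring, Real.sqrt_mul (by norm_num : (0:ℝ) ≤ 4),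
            sqrt_four, Real.sqrt_inv]
          ring

end Bessel


namespace Main
open Bessel

/-- bound via monotonicity: if `φ 0 = 0` and `|φ'| ≤ c x^d` on the interior then
`|φ x| ≤ c x^(d+1)` on `[0,1]`. -/
lemma poly_bound (φ g : ℝ → ℝ) (c : ℝ) (hc : 0 ≤ c) (d : ℕ)
    (hcont : ContinuousOn φ (Set.Icc 0 1))
    (hder : ∀ x ∈ Set.Ioo (0:ℝ) 1, HasDerivAt φ (g x) x)
    (hb : ∀ x ∈ Set.Ioo (0:ℝ) 1, |g x| ≤ c * x ^ d)
    (h0 : φ 0 = 0) :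
    ∀ x ∈ Set.Icc (0:ℝ) 1, |φ x| ≤ c * x ^ (d+1) := by
  have hdc : ((d:ℝ) + 1) ≠ 0 := by positivity
  have hpoly : ∀ x : ℝ, HasDerivAt (fun y : ℝ => c * y ^ (d+1) / ((d:ℝ)+1)) (c * x ^ d) x := by
    intro x
    have hpow := hasDerivAt_pow (d+1) x
    have hp := (hpow.const_mul c).div_const ((d:ℝ)+1)
    refine hp.congr_deriv ?_
    symm
    simp only [Nat.add_sub_cancel]
    push_cast
    field_simp
  have key : ∀ (ε : ℝ), ε = 1 ∨ ε = -1 → ∀ x ∈ Set.Icc (0:ℝ) 1,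
      ε * φ x ≤ c * x ^ (d+1) / ((d:ℝ)+1) := by
    intro ε hε x hx
    set ψ : ℝ → ℝ := fun y => c * y ^ (d+1) / ((d:ℝ)+1) - ε * φ y with hψ
    have hψc : ContinuousOn ψ (Set.Icc 0 1) := by
      apply ContinuousOn.sub
      · exact (continuousOn_const.mul (continuousOn_pow _)).div_const _
      · exact continuousOn_const.mul hcont
    have hψd : ∀ y ∈ interior (Set.Icc (0:ℝ) 1), HasDerivAt ψ (c * y ^ d - ε * g y) y := by
      intro y hy
      rw [interior_Icc] at hy
      exact (hpoly y).sub ((hder y hy).const_mul ε)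
    have hmono : MonotoneOn ψ (Set.Icc 0 1) := by
      apply monotoneOn_of_deriv_nonneg (convex_Icc 0 1) hψc
      · intro y hy
        exact (hψd y hy).differentiableAt.differentiableWithinAt
      · intro y hy
        rw [(hψd y hy).deriv]
        rw [interior_Icc] at hy
        have hgb := hb y hy
        have hεg : ε * g y ≤ |g y| := by
          rcases hε with h | h
          · subst h; rw [one_mul]; exact le_abs_self _
          · subst h
            rw [neg_one_mul]
            exact neg_le_abs _
        linarith
    have h01 : (0:ℝ) ∈ Set.Icc (0:ℝ) 1 := by norm_num
    have := hmono h01 hx hx.1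
    rw [hψ] at this
    simp only [h0, mul_zero, sub_zero, zero_pow (Nat.succ_ne_zero d), mul_zero, zero_div] at this
    linarith [this]
  intro x hx
  have h1 := key 1 (Or.inl rfl) x hx
  have h2 := key (-1) (Or.inr rfl) x hx
  rw [one_mul] at h1
  rw [neg_one_mul] at h2
  have hdiv : c * x ^ (d+1) / ((d:ℝ)+1) ≤ c * x ^ (d+1) := by
    apply div_le_self (mul_nonneg hc (pow_nonneg hx.1 _))
    have : (0:ℝ) ≤ (d:ℝ) := Nat.cast_nonneg d
    linarith
  rw [abs_le]
  constructor <;> linarith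

section F

variable (s : ℕ) (f : ℝ → ℝ)

/-- Taylor-type bound at 0. -/
lemma taylor_bound (hs : 1 ≤ s)
    (hdiff : ∀ i < 2 * s, DifferentiableOn ℝ (iteratedDeriv i f) (Set.Icc (0 : ℝ) 1))
    (h0 : ∀ i < 2 * s, iteratedDeriv i f 0 = 0)
    (M : ℝ) (hM0 : 0 ≤ M)
    (hM : ∀ x ∈ Set.Icc (0:ℝ) 1, |iteratedDeriv (2 * s) f x| ≤ M) :
    ∀ d j, j + d = 2 * s → ∀ x ∈ Set.Icc (0:ℝ) 1, |iteratedDeriv j f x| ≤ M * x ^ d := by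
  intro d
  induction d with
  | zero =>
      intro j hj x hx
      have : j = 2 * s := by omega
      subst this
      simpa using hM x hx
  | succ d ih =>
      intro j hj x hx
      have hjlt : j < 2 * s := by omega
      apply poly_bound (iteratedDeriv j f) (iteratedDeriv (j+1) f) M hM0 d
        ((hdiff j hjlt).continuousOn) ?_ ?_ (h0 j hjlt) x hx
      · intro y hy
        have hmem : y ∈ Set.Icc (0:ℝ) 1 := Set.mem_Icc.mpr ⟨hy.1.le, hy.2.le⟩
        have hda := (hdiff j hjlt y hmem).differentiableAt (Icc_mem_nhds hy.1 hy.2)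
        have := hda.hasDerivAt
        rwa [← iteratedDeriv_succ] at this
      · intro y hy
        have hmem : y ∈ Set.Icc (0:ℝ) 1 := Set.mem_Icc.mpr ⟨hy.1.le, hy.2.le⟩
        exact ih (j+1) (by omega) y hmem

/-- the iterated-Bessel-operator tower: `HT f k m` is the `m`-th derivative of
`x^(2k) · L^k f` where `L g = g'' + g'/x`. -/
noncomputable def HT : ℕ → ℕ → ℝ → ℝ
  | 0, m => iteratedDeriv m f
  | (k+1), m => fun x => x^2 * HT k (m+2) x + (2*(m:ℝ) - 4*(k:ℝ) + 1) * x * HT k (m+1) x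
      + ((m:ℝ) - 2*(k:ℝ))^2 * HT k m x

lemma HT_zero (m : ℕ) : HT f 0 m = iteratedDeriv m f := rfl

lemma HT_succ (k m : ℕ) (x : ℝ) : HT f (k+1) m x
    = x^2 * HT f k (m+2) x + (2*(m:ℝ) - 4*(k:ℝ) + 1) * x * HT f k (m+1) x
      + ((m:ℝ) - 2*(k:ℝ))^2 * HT f k m x := rfl

lemma HT_deriv
    (hdiff : ∀ i < 2 * s, DifferentiableOn ℝ (iteratedDeriv i f) (Set.Icc (0 : ℝ) 1)) :
    ∀ k m, m + 2*k + 1 ≤ 2*s → ∀ x ∈ Set.Ioo (0:ℝ) 1,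
      HasDerivAt (HT f k m) (HT f k (m+1) x) x := by
  intro k
  induction k with
  | zero =>
      intro m hm x hx
      have hmem : x ∈ Set.Icc (0:ℝ) 1 := Set.mem_Icc.mpr ⟨hx.1.le, hx.2.le⟩
      have hda := (hdiff m (by omega) x hmem).differentiableAt (Icc_mem_nhds hx.1 hx.2)
      have := hda.hasDerivAt
      rw [HT_zero, HT_zero, iteratedDeriv_succ]
      exact this
  | succ k ih =>
      intro m hm x hx
      have h2 := ih (m+2) (by omega) x hx
      have h1 := ih (m+1) (by omega) x hx
      have h0 := ih m (by omega) x hx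
      have hp2 : HasDerivAt (fun y : ℝ => y^2) (2*x) x := by
        simpa using hasDerivAt_pow 2 x
      have hid : HasDerivAt (fun y : ℝ => y) 1 x := hasDerivAt_id x
      have hsum := ((hp2.fun_mul h2).fun_add
        (((hid.const_mul ((2*(m:ℝ) - 4*(k:ℝ) + 1))).fun_mul h1).fun_add
          (h0.const_mul (((m:ℝ) - 2*(k:ℝ))^2))))
      have hfun : (fun y => y^2 * HT f k (m+2) y +
          ((2*(m:ℝ) - 4*(k:ℝ) + 1) * y * HT f k (m+1) y +
            ((m:ℝ) - 2*(k:ℝ))^2 * HT f k m y)) = HT f (k+1) m := by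
        funext y
        rw [HT_succ]
        ring
      rw [hfun] at hsum
      refine hsum.congr_deriv ?_
      symm
      rw [HT_succ]
      push_cast
      ring

lemma HT_one (hs : 1 ≤ s)
    (h1 : ∀ j ≤ 2 * s - 2, iteratedDeriv j f 1 = 0) :
    ∀ k m, m + 2*k + 2 ≤ 2*s → HT f k m 1 = 0 := by
  intro k
  induction k with
  | zero =>
      intro m hm
      rw [HT_zero]
      exact h1 m (by omega)
  | succ k ih =>
      intro m hm
      rw [HT_succ, ih (m+2) (by omega), ih (m+1) (by omega), ih m (by omega)]
      ring

lemma HT_cont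
    (hdiff : ∀ i < 2 * s, DifferentiableOn ℝ (iteratedDeriv i f) (Set.Icc (0 : ℝ) 1)) :
    ∀ k m, m + 2*k < 2*s → ContinuousOn (HT f k m) (Set.Icc (0:ℝ) 1) := by
  intro k
  induction k with
  | zero =>
      intro m hm
      rw [HT_zero]
      exact (hdiff m (by omega)).continuousOn
  | succ k ih =>
      intro m hm
      have h2 := ih (m+2) (by omega)
      have h1 := ih (m+1) (by omega)
      have h0 := ih m (by omega)
      have : ContinuousOn (fun x : ℝ => x^2 * HT f k (m+2) x +
          (2*(m:ℝ) - 4*(k:ℝ) + 1) * x * HT f k (m+1) x +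
          ((m:ℝ) - 2*(k:ℝ))^2 * HT f k m x) (Set.Icc (0:ℝ) 1) := by
        apply ContinuousOn.add
        apply ContinuousOn.add
        · exact (continuousOn_pow 2).mul h2
        · exact ((continuousOn_const.mul continuousOn_id).mul h1)
        · exact continuousOn_const.mul h0
      exact this

lemma HT_meas (hs : 1 ≤ s)
    (hdiff : ∀ i < 2 * s, DifferentiableOn ℝ (iteratedDeriv i f) (Set.Icc (0 : ℝ) 1)) :
    ∀ k m, m + 2*k ≤ 2*s →
      AEStronglyMeasurable (HT f k m) (volume.restrict (Set.Ioc (0:ℝ) 1)) := by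
  intro k
  induction k with
  | zero =>
      intro m hm
      rw [HT_zero]
      rcases Nat.lt_or_ge m (2*s) with h | h
      · have hc : ContinuousOn (iteratedDeriv m f) (Set.Ioc (0:ℝ) 1) :=
          ((hdiff m h).continuousOn).mono Set.Ioc_subset_Icc_self
        exact hc.aestronglyMeasurable measurableSet_Ioc
      · have hm2 : m = 2*s := by omega
        subst hm2
        have h2s : 2*s = (2*s - 1) + 1 := by omega
        rw [h2s, iteratedDeriv_succ]
        exact (measurable_deriv _).aestronglyMeasurable
  | succ k ih =>
      intro m hm
      have h2 := ih (m+2) (by omega)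
      have h1 := ih (m+1) (by omega)
      have h0 := ih m (by omega)
      have : AEStronglyMeasurable (fun x : ℝ => x^2 * HT f k (m+2) x +
          (2*(m:ℝ) - 4*(k:ℝ) + 1) * x * HT f k (m+1) x +
          ((m:ℝ) - 2*(k:ℝ))^2 * HT f k m x) (volume.restrict (Set.Ioc (0:ℝ) 1)) := by
        apply AEStronglyMeasurable.add
        apply AEStronglyMeasurable.add
        · exact ((continuous_pow 2).aestronglyMeasurable).mul h2
        · exact ((continuous_const.mul continuous_id).aestronglyMeasurable).mul h1
        · exact (continuous_const.aestronglyMeasurable).mul h0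
      exact this

lemma HT_bound (hs : 1 ≤ s) (M : ℝ) (hM0 : 0 ≤ M)
    (hb0 : ∀ m ≤ 2*s, ∀ x ∈ Set.Icc (0:ℝ) 1, |iteratedDeriv m f x| ≤ M * x ^ (2*s - m)) :
    ∀ k m, m + 2*k ≤ 2*s → ∀ x ∈ Set.Ioc (0:ℝ) 1,
      |HT f k m x| ≤ (M * ((2*(s:ℝ)+2)^2)^k) * x ^ (2*s - m) := by
  intro k
  induction k with
  | zero =>
      intro m hm x hx
      have hmem : x ∈ Set.Icc (0:ℝ) 1 := Set.mem_Icc.mpr ⟨hx.1.le, hx.2⟩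
      simpa [HT_zero] using hb0 m (by omega) x hmem
  | succ k ih =>
      intro m hm x hx
      have hx0 : (0:ℝ) < x := hx.1
      have hx1 : x ≤ 1 := hx.2
      set A := M * ((2*(s:ℝ)+2)^2)^k with hA
      have hA0 : 0 ≤ A := by positivity
      have h2 := ih (m+2) (by omega) x hx
      have h1 := ih (m+1) (by omega) x hx
      have h0 := ih m (by omega) x hx
      rw [HT_succ]
      have e2 : x^2 * x ^ (2*s - (m+2)) = x ^ (2*s - m) := by
        rw [← pow_add]
        congr 1
        omega
      have e1 : x * x ^ (2*s - (m+1)) = x ^ (2*s - m) := by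
        rw [← pow_succ']
        congr 1
        omega
      have hms : (m:ℝ) ≤ 2*(s:ℝ) := by
        have : (m:ℕ) ≤ 2*s := by omega
        exact_mod_cast this
      have hks : (k:ℝ) ≤ (s:ℝ) := by
        have : (k:ℕ) ≤ s := by omega
        exact_mod_cast this
      have habs : |x^2 * HT f k (m+2) x + (2*(m:ℝ) - 4*(k:ℝ) + 1) * x * HT f k (m+1) x
          + ((m:ℝ) - 2*(k:ℝ))^2 * HT f k m x|
          ≤ x^2 * |HT f k (m+2) x| + |2*(m:ℝ) - 4*(k:ℝ) + 1| * x * |HT f k (m+1) x|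
            + ((m:ℝ) - 2*(k:ℝ))^2 * |HT f k m x| := by
        have t := abs_add_three (x^2 * HT f k (m+2) x)
          ((2*(m:ℝ) - 4*(k:ℝ) + 1) * x * HT f k (m+1) x)
          (((m:ℝ) - 2*(k:ℝ))^2 * HT f k m x)
        have r2 : |x^2 * HT f k (m+2) x| = x^2 * |HT f k (m+2) x| := by
          rw [abs_mul, abs_of_nonneg (sq_nonneg x)]
        have r1 : |(2*(m:ℝ) - 4*(k:ℝ) + 1) * x * HT f k (m+1) x|
            = |2*(m:ℝ) - 4*(k:ℝ) + 1| * x * |HT f k (m+1) x| := by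
          rw [abs_mul, abs_mul, abs_of_pos hx0]
        have r0 : |((m:ℝ) - 2*(k:ℝ))^2 * HT f k m x|
            = ((m:ℝ) - 2*(k:ℝ))^2 * |HT f k m x| := by
          rw [abs_mul, abs_of_nonneg (sq_nonneg _)]
        rw [r2, r1, r0] at t
        exact t
      have hc1 : |2*(m:ℝ) - 4*(k:ℝ) + 1| ≤ 8*(s:ℝ) + 1 := by
        rw [abs_le]
        constructor <;> nlinarith [(by positivity : (0:ℝ) ≤ (m:ℝ)), (by positivity : (0:ℝ) ≤ (k:ℝ)), hms, hks]
      have hc0 : ((m:ℝ) - 2*(k:ℝ))^2 ≤ (2*(s:ℝ))^2 := by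
        apply sq_le_sq' <;> nlinarith [(by positivity : (0:ℝ) ≤ (m:ℝ)), (by positivity : (0:ℝ) ≤ (k:ℝ)), hms, hks]
      have hxp : (0:ℝ) ≤ x ^ (2*s - m) := by positivity
      calc |x^2 * HT f k (m+2) x + (2*(m:ℝ) - 4*(k:ℝ) + 1) * x * HT f k (m+1) x
          + ((m:ℝ) - 2*(k:ℝ))^2 * HT f k m x|
          ≤ x^2 * (A * x ^ (2*s - (m+2))) + |2*(m:ℝ) - 4*(k:ℝ) + 1| * x * (A * x ^ (2*s - (m+1)))
            + ((m:ℝ) - 2*(k:ℝ))^2 * (A * x ^ (2*s - m)) := by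
            refine le_trans habs ?_
            have b2 := mul_le_mul_of_nonneg_left h2 (sq_nonneg x)
            have b1 := mul_le_mul_of_nonneg_left h1
              (mul_nonneg (abs_nonneg (2*(m:ℝ) - 4*(k:ℝ) + 1)) hx0.le)
            have b0 := mul_le_mul_of_nonneg_left h0 (sq_nonneg ((m:ℝ) - 2*(k:ℝ)))
            linarith
      _ = (1 + |2*(m:ℝ) - 4*(k:ℝ) + 1| + ((m:ℝ) - 2*(k:ℝ))^2) * A * x ^ (2*s - m) := by
            linear_combination A * e2 + (|2*(m:ℝ) - 4*(k:ℝ) + 1| * A) * e1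
      _ ≤ ((2*(s:ℝ)+2)^2) * A * x ^ (2*s - m) := by
            have hcoef : 1 + |2*(m:ℝ) - 4*(k:ℝ) + 1| + ((m:ℝ) - 2*(k:ℝ))^2 ≤ (2*(s:ℝ)+2)^2 := by
              have hs1 : (1:ℝ) ≤ (s:ℝ) := by exact_mod_cast hs
              nlinarith [hc1, hc0]
            exact mul_le_mul_of_nonneg_right (mul_le_mul_of_nonneg_right hcoef hA0) hxp
      _ = (M * ((2*(s:ℝ)+2)^2)^(k+1)) * x ^ (2*s - m) := by
            rw [hA]
            ring


/-- The integration-by-parts step. -/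
lemma ibp_step (hs : 1 ≤ s)
    (hder : ∀ k m, m + 2*k + 1 ≤ 2*s → ∀ x ∈ Set.Ioo (0:ℝ) 1,
      HasDerivAt (HT f k m) (HT f k (m+1) x) x)
    (hone : ∀ k m, m + 2*k + 2 ≤ 2*s → HT f k m 1 = 0)
    (hcont : ∀ k m, m + 2*k < 2*s → ContinuousOn (HT f k m) (Set.Icc (0:ℝ) 1))
    (hmeas : ∀ k m, m + 2*k ≤ 2*s →
      AEStronglyMeasurable (HT f k m) (volume.restrict (Set.Ioc (0:ℝ) 1)))
    (A : ℝ) (hA0 : 0 ≤ A)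
    (hbd : ∀ k m, m + 2*k ≤ 2*s → ∀ x ∈ Set.Ioc (0:ℝ) 1, |HT f k m x| ≤ A * x ^ (2*s - m))
    (l : ℝ) (hl : 1 < l) (hJl : J0 l = 0) (k : ℕ) (hk : k + 1 ≤ s) :
    (∫ x in Set.Ioc (0:ℝ) 1, (HT f (k+1) 0 x / x^(2*(k+1))) * J0 (l*x) * x)
      = -(l^2) * ∫ x in Set.Ioc (0:ℝ) 1, (HT f k 0 x / x^(2*k)) * J0 (l*x) * x := by
  have hl0 : (0:ℝ) < l := lt_trans one_pos hl
  -- bounds for J0, J1 on [0,l]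
  obtain ⟨CJ, hCJ⟩ := (isCompact_Icc (a := (0:ℝ)) (b := l)).exists_bound_of_continuousOn
    continuous_J0.continuousOn
  obtain ⟨CJ1, hCJ1⟩ := (isCompact_Icc (a := (0:ℝ)) (b := l)).exists_bound_of_continuousOn
    continuous_J1.continuousOn
  have h0l : (0:ℝ) ∈ Set.Icc (0:ℝ) l := Set.mem_Icc.mpr ⟨le_refl 0, hl0.le⟩
  have hCJ0 : 0 ≤ CJ := le_trans (norm_nonneg _) (hCJ 0 h0l)
  have hCJ10 : 0 ≤ CJ1 := le_trans (norm_nonneg _) (hCJ1 0 h0l)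
  have hmemJ : ∀ x ∈ Set.Ioc (0:ℝ) 1, l * x ∈ Set.Icc (0:ℝ) l := by
    intro x hx
    constructor
    · exact (mul_pos hl0 hx.1).le
    · nlinarith [hx.1, hx.2]
  -- derivative facts for the oscillating factor
  have hu : ∀ x : ℝ, HasDerivAt (fun y => J0 (l*y)) (-(l * J1 (l*x))) x := by
    intro x
    have h := (hasDerivAt_J0 (l*x)).comp x ((hasDerivAt_id x).const_mul l)
    have : -(J1 (l*x)) * (l * 1) = -(l * J1 (l*x)) := by ring
    rw [this] at h
    exact h
  have hud : ∀ x : ℝ, HasDerivAt (fun y => (-l) * J1 (l*y)) (-(l^2 * J1d (l*x))) x := by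
    intro x
    have h := ((hasDerivAt_J1 (l*x)).comp x ((hasDerivAt_id x).const_mul l)).const_mul (-l)
    have h3 : (-l) * ((J1d (l*x)) * (l * 1)) = -(l^2 * J1d (l*x)) := by ring
    rw [h3] at h
    exact h
  set N : ℝ → ℝ := fun y => HT f k 0 y * y * ((-l) * J1 (l*y)) - HT f k 1 y * y * J0 (l*y)
      + 2*(k:ℝ) * HT f k 0 y * J0 (l*y) with hN
  set F : ℝ → ℝ := fun y => N y / y^(2*k) with hFdef
  set G : ℝ → ℝ := fun x => -(l^2) * ((HT f k 0 x / x^(2*k)) * J0 (l*x) * x)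
      - (HT f (k+1) 0 x / x^(2*(k+1))) * J0 (l*x) * x with hGdef
  -- (i) the derivative computation
  have hkey : ∀ x ∈ Set.Ioo (0:ℝ) 1, HasDerivAt F (G x) x := by
    intro x hx
    have hx0 : (0:ℝ) < x := hx.1
    have hxne : x ≠ 0 := hx0.ne'
    have hlx : (0:ℝ) < l * x := by positivity
    have hH0 := hder k 0 (by omega) x hx
    have hH1 := hder k 1 (by omega) x hx
    have hid : HasDerivAt (fun y : ℝ => y) 1 x := hasDerivAt_id x
    have hNder := (((hH0.fun_mul hid).fun_mul (hud x)).fun_sub ((hH1.fun_mul hid).fun_mul (hu x))).fun_add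
      (((hH0.const_mul (2*(k:ℝ))).fun_mul (hu x)))
    have hpowd : HasDerivAt (fun y : ℝ => y^(2*k)) ((2*k:ℝ) * x^(2*k) / x) x := by
      have hp := hasDerivAt_pow (2*k) x
      refine hp.congr_deriv ?_
      symm
      rcases Nat.eq_zero_or_pos k with h | h
      · subst h; simp
      · have he : 2*k - 1 + 1 = 2*k := by omega
        have h1 : x^(2*k) = x^(2*k-1) * x := by
          rw [← pow_succ, he]
        rw [h1]
        field_simp
        push_cast
        ring
    have hF := hNder.fun_div hpowd (pow_ne_zero _ hxne)
    have hjd : J1d (l*x) = J0 (l*x) - J1 (l*x) / (l*x) := by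
      have hid2 := J1d_identity (l*x)
      field_simp
      linarith
    refine hF.congr_deriv ?_
    symm
    rw [hGdef]
    show -(l^2) * ((HT f k 0 x / x^(2*k)) * J0 (l*x) * x)
      - (HT f (k+1) 0 x / x^(2*(k+1))) * J0 (l*x) * x = _
    rw [HT_succ, hjd]
    have hp1 : x ^ (2*(k+1)) = x^(2*k) * x^2 := by
      rw [show 2*(k+1) = 2*k+2 from by ring, pow_add]
    rw [hp1]
    field_simp
    ring
  -- J composed with scaling, continuity
  have hJ0c : Continuous (fun y : ℝ => J0 (l*y)) :=
    continuous_J0.comp (continuous_const.mul continuous_id)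
  have hJ1c : Continuous (fun y : ℝ => J1 (l*y)) :=
    continuous_J1.comp (continuous_const.mul continuous_id)
  -- (ii) boundary values
  have hF1 : F 1 = 0 := by
    have h00 : HT f k 0 1 = 0 := hone k 0 (by omega)
    rw [hFdef, hN]
    simp [h00, hJl]
  have hF0 : F 0 = 0 := by
    rcases Nat.eq_zero_or_pos k with hk0 | hk0
    · subst hk0
      rw [hFdef, hN]
      norm_num
    · rw [hFdef]
      have hz : (0:ℝ)^(2*k) = 0 := zero_pow (by omega)
      show N 0 / (0:ℝ)^(2*k) = 0
      rw [hz, div_zero]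
  -- (iv) the linear bound near 0
  set Cb := A*(l*CJ1) + A*CJ + 2*(k:ℝ)*A*CJ with hCb
  have hCb0 : 0 ≤ Cb := by positivity
  have hFb : ∀ x ∈ Set.Icc (0:ℝ) 1, |F x| ≤ Cb * x := by
    intro x hx
    rcases eq_or_lt_of_le hx.1 with h | hx0
    · rw [← h, hF0]
      simp
    · have hxIoc : x ∈ Set.Ioc (0:ℝ) 1 := ⟨hx0, hx.2⟩
      have hx1 : x ≤ 1 := hx.2
      have hb0x := hbd k 0 (by omega) x hxIoc
      have hb1x := hbd k 1 (by omega) x hxIoc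
      rw [Nat.sub_zero] at hb0x
      have hp1 : x ^ (2*s) ≤ x ^ (2*k) := pow_le_pow_of_le_one hx0.le hx1 (by omega)
      have hp2 : x ^ (2*s - 1) ≤ x ^ (2*k) := pow_le_pow_of_le_one hx0.le hx1 (by omega)
      have hp3 : x ^ (2*s) ≤ x ^ (2*k+1) := pow_le_pow_of_le_one hx0.le hx1 (by omega)
      have hJ0x : |J0 (l*x)| ≤ CJ := by
        have := hCJ (l*x) (hmemJ x hxIoc)
        rwa [Real.norm_eq_abs] at this
      have hJ1x : |J1 (l*x)| ≤ CJ1 := by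
        have := hCJ1 (l*x) (hmemJ x hxIoc)
        rwa [Real.norm_eq_abs] at this
      have hB0 : |HT f k 0 x| ≤ A * x ^ (2*k) := le_trans hb0x (by nlinarith)
      have hB0' : |HT f k 0 x| ≤ A * x ^ (2*k+1) := le_trans hb0x (by nlinarith)
      have hB1 : |HT f k 1 x| ≤ A * x ^ (2*k) := le_trans hb1x (by nlinarith)
      have hNb : |N x| ≤ Cb * x ^ (2*k+1) := by
        rw [hN]
        have t := abs_add_three (HT f k 0 x * x * ((-l) * J1 (l*x)))
          (-(HT f k 1 x * x * J0 (l*x))) (2*(k:ℝ) * HT f k 0 x * J0 (l*x))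
        have e : HT f k 0 x * x * ((-l) * J1 (l*x)) + -(HT f k 1 x * x * J0 (l*x))
            + 2*(k:ℝ) * HT f k 0 x * J0 (l*x)
            = HT f k 0 x * x * ((-l) * J1 (l*x)) - HT f k 1 x * x * J0 (l*x)
              + 2*(k:ℝ) * HT f k 0 x * J0 (l*x) := by ring
        rw [e] at t
        refine le_trans t ?_
        have r1 : |HT f k 0 x * x * ((-l) * J1 (l*x))|
            = |HT f k 0 x| * x * (l * |J1 (l*x)|) := by
          rw [abs_mul, abs_mul, abs_mul, abs_neg, abs_of_pos hx0, abs_of_pos hl0]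
        have r2 : |-(HT f k 1 x * x * J0 (l*x))| = |HT f k 1 x| * x * |J0 (l*x)| := by
          rw [abs_neg, abs_mul, abs_mul, abs_of_pos hx0]
        have r3 : |2*(k:ℝ) * HT f k 0 x * J0 (l*x)|
            = 2*(k:ℝ) * |HT f k 0 x| * |J0 (l*x)| := by
          rw [abs_mul, abs_mul, abs_of_nonneg (by positivity : (0:ℝ) ≤ 2*(k:ℝ))]
        rw [r1, r2, r3]
        have hxp : x ^ (2*k+1) = x ^ (2*k) * x := by rw [pow_succ]
        have b1 : |HT f k 0 x| * x * (l * |J1 (l*x)|) ≤ (A * (l*CJ1)) * x ^ (2*k+1) := by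
          rw [hxp]
          have s1 : |HT f k 0 x| * x ≤ A * x^(2*k) * x := mul_le_mul_of_nonneg_right hB0 hx0.le
          have s2 : l * |J1 (l*x)| ≤ l * CJ1 := mul_le_mul_of_nonneg_left hJ1x hl0.le
          calc |HT f k 0 x| * x * (l * |J1 (l*x)|) ≤ (A * x^(2*k) * x) * (l * CJ1) :=
                mul_le_mul s1 s2 (mul_nonneg hl0.le (abs_nonneg _))
                  (by positivity)
            _ = (A * (l*CJ1)) * (x^(2*k) * x) := by ring
        have b2 : |HT f k 1 x| * x * |J0 (l*x)| ≤ (A * CJ) * x ^ (2*k+1) := by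
          rw [hxp]
          have s1 : |HT f k 1 x| * x ≤ A * x^(2*k) * x := mul_le_mul_of_nonneg_right hB1 hx0.le
          calc |HT f k 1 x| * x * |J0 (l*x)| ≤ (A * x^(2*k) * x) * CJ :=
                mul_le_mul s1 hJ0x (abs_nonneg _) (by positivity)
            _ = (A * CJ) * (x^(2*k) * x) := by ring
        have b3 : 2*(k:ℝ) * |HT f k 0 x| * |J0 (l*x)| ≤ (2*(k:ℝ)*A*CJ) * x ^ (2*k+1) := by
          have s1 : 2*(k:ℝ) * |HT f k 0 x| ≤ 2*(k:ℝ) * (A * x^(2*k+1)) :=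
            mul_le_mul_of_nonneg_left hB0' (by positivity)
          calc 2*(k:ℝ) * |HT f k 0 x| * |J0 (l*x)| ≤ (2*(k:ℝ) * (A * x^(2*k+1))) * CJ :=
                mul_le_mul s1 hJ0x (abs_nonneg _) (by positivity)
            _ = (2*(k:ℝ)*A*CJ) * x^(2*k+1) := by ring
        rw [hCb]
        linarith
      rw [hFdef]
      show |N x / x^(2*k)| ≤ Cb * x
      rw [abs_div, abs_of_pos (pow_pos hx0 _), div_le_iff₀ (pow_pos hx0 _)]
      calc |N x| ≤ Cb * x ^ (2*k+1) := hNb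
        _ = Cb * x * x ^ (2*k) := by rw [pow_succ]; ring
  -- (v) continuity of F on [0,1]
  have hNcont : ContinuousOn N (Set.Icc (0:ℝ) 1) := by
    rw [hN]
    apply ContinuousOn.add
    apply ContinuousOn.sub
    · exact ((hcont k 0 (by omega)).mul continuousOn_id).mul
        ((continuous_const.mul hJ1c).continuousOn)
    · exact ((hcont k 1 (by omega)).mul continuousOn_id).mul hJ0c.continuousOn
    · exact (continuousOn_const.mul (hcont k 0 (by omega))).mul hJ0c.continuousOn
  have hFcont : ContinuousOn F (Set.Icc (0:ℝ) 1) := by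
    intro x hx
    rcases eq_or_lt_of_le hx.1 with h | hx0
    · have hx0' : x = 0 := h.symm
      subst hx0'
      have h1 : Filter.Tendsto F (nhdsWithin 0 (Set.Icc (0:ℝ) 1)) (nhds 0) := by
        apply squeeze_zero_norm'
        · filter_upwards [self_mem_nhdsWithin] with y hy
          simpa [Real.norm_eq_abs] using hFb y hy
        · have h2 : Filter.Tendsto (fun y : ℝ => Cb * y) (nhds 0) (nhds (Cb * 0)) :=
            (continuous_const.mul continuous_id).tendsto 0
          rw [mul_zero] at h2
          exact h2.mono_left nhdsWithin_le_nhds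
      show Filter.Tendsto F (nhdsWithin 0 (Set.Icc (0:ℝ) 1)) (nhds (F 0))
      rw [hF0]
      exact h1
    · have hNx : ContinuousWithinAt N (Set.Icc (0:ℝ) 1) x := hNcont x hx
      exact hNx.div ((continuous_pow (2*k)).continuousWithinAt) (pow_ne_zero _ hx0.ne')
  -- (vi) integrability
  have hpiece : ∀ j, j ≤ s →
      IntegrableOn (fun x => (HT f j 0 x / x^(2*j)) * J0 (l*x) * x) (Set.Ioc (0:ℝ) 1) volume := by
    intro j hj
    have haesm : AEStronglyMeasurable (fun x => (HT f j 0 x / x^(2*j)) * J0 (l*x) * x)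
        (volume.restrict (Set.Ioc (0:ℝ) 1)) := by
      have heq : (fun x => (HT f j 0 x / x^(2*j)) * J0 (l*x) * x)
          = fun x => (HT f j 0 x * (x^(2*j))⁻¹) * J0 (l*x) * x := by
        funext x; rw [div_eq_mul_inv]
      rw [heq]
      exact (((hmeas j 0 (by omega)).mul
        ((continuous_pow (2*j)).measurable.inv.aestronglyMeasurable)).mul
        hJ0c.aestronglyMeasurable).mul continuous_id.aestronglyMeasurable
    apply Integrable.mono' (integrable_const (A * CJ)) haesm
    rw [ae_restrict_iff' measurableSet_Ioc]
    apply Filter.Eventually.of_forall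
    intro x hx
    have hx0 : (0:ℝ) < x := hx.1
    have hx1 : x ≤ 1 := hx.2
    have hb := hbd j 0 (by omega) x hx
    rw [Nat.sub_zero] at hb
    have hJ0x : |J0 (l*x)| ≤ CJ := by
      have := hCJ (l*x) (hmemJ x hx)
      rwa [Real.norm_eq_abs] at this
    have hdivb : |HT f j 0 x / x^(2*j)| ≤ A := by
      rw [abs_div, abs_of_pos (pow_pos hx0 _), div_le_iff₀ (pow_pos hx0 _)]
      calc |HT f j 0 x| ≤ A * x^(2*s) := hb
        _ ≤ A * x^(2*j) := by
            have := pow_le_pow_of_le_one hx0.le hx1 (by omega : 2*j ≤ 2*s)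
            nlinarith
        _ = A * x^(2*j) := rfl
    rw [Real.norm_eq_abs, abs_mul, abs_mul, abs_of_pos hx0]
    calc |HT f j 0 x / x^(2*j)| * |J0 (l*x)| * x ≤ A * CJ * 1 := by
          have h1 : |HT f j 0 x / x^(2*j)| * |J0 (l*x)| ≤ A * CJ := by
            apply mul_le_mul hdivb hJ0x (abs_nonneg _) hA0
          nlinarith [abs_nonneg (HT f j 0 x / x^(2*j)), abs_nonneg (J0 (l*x)),
            mul_nonneg (abs_nonneg (HT f j 0 x / x^(2*j))) (abs_nonneg (J0 (l*x)))]
      _ = A * CJ := mul_one _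
  have hGint' : IntegrableOn G (Set.Ioc (0:ℝ) 1) volume := by
    rw [hGdef]
    exact ((hpiece k (by omega)).const_mul (-(l^2))).sub (hpiece (k+1) hk)
  have hGint : IntervalIntegrable G volume 0 1 := by
    rw [intervalIntegrable_iff, Set.uIoc_of_le (by norm_num : (0:ℝ) ≤ 1)]
    exact hGint'
  -- (vii) FTC
  have hFTC := intervalIntegral.integral_eq_sub_of_hasDeriv_right_of_le
    (by norm_num : (0:ℝ) ≤ 1) hFcont (fun x hx => (hkey x hx).hasDerivWithinAt) hGint
  rw [hF1, hF0, sub_zero] at hFTC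
  have hset : (∫ y in Set.Ioc (0:ℝ) 1, G y) = 0 := by
    rw [← intervalIntegral.integral_of_le (by norm_num : (0:ℝ) ≤ 1)]
    exact hFTC
  have hsub : (∫ y in Set.Ioc (0:ℝ) 1, G y)
      = (∫ y in Set.Ioc (0:ℝ) 1, -(l^2) * ((HT f k 0 y / y^(2*k)) * J0 (l*y) * y))
        - ∫ y in Set.Ioc (0:ℝ) 1, (HT f (k+1) 0 y / y^(2*(k+1))) * J0 (l*y) * y := by
    rw [hGdef]
    exact integral_sub ((hpiece k (by omega)).const_mul (-(l^2))) (hpiece (k+1) hk)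
  have hcm : (∫ y in Set.Ioc (0:ℝ) 1, -(l^2) * ((HT f k 0 y / y^(2*k)) * J0 (l*y) * y))
      = -(l^2) * ∫ y in Set.Ioc (0:ℝ) 1, (HT f k 0 y / y^(2*k)) * J0 (l*y) * y :=
    MeasureTheory.integral_const_mul _ _
  rw [hsub, hcm] at hset
  linarith


end F

end Main


open Main Bessel in
theorem fourier_bessel_coefficient_decay (s : ℕ) (hs : 1 < s) (f : ℝ → ℝ)
    (hdiff : ∀ i < 2 * s, DifferentiableOn ℝ (iteratedDeriv i f) (Set.Icc (0 : ℝ) 1))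
    (h0 : ∀ i < 2 * s, iteratedDeriv i f 0 = 0)
    (h1 : ∀ j ≤ 2 * s - 2, iteratedDeriv j f 1 = 0)
    (hbdd : ∃ M : ℝ, ∀ x ∈ Set.Icc (0 : ℝ) 1, |iteratedDeriv (2 * s) f x| ≤ M) :
    ∃ C > 0, ∀ l : ℝ, 0 < l → J0 l = 0 →
      |(2 / (J1 l) ^ 2) * ∫ x in Set.Icc (0 : ℝ) 1, f x * J0 (l * x) * x|
        ≤ C / l ^ ((2 * s : ℝ) - 1 / 2) := by
  obtain ⟨M, hM⟩ := hbdd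
  have hs1 : 1 ≤ s := le_of_lt hs
  have hM0 : 0 ≤ M := le_trans (abs_nonneg _) (hM 0 (by norm_num))
  have hb0 : ∀ m ≤ 2*s, ∀ x ∈ Set.Icc (0:ℝ) 1, |iteratedDeriv m f x| ≤ M * x ^ (2*s - m) := by
    intro m hm x hx
    exact taylor_bound s f hs1 hdiff h0 M hM0 hM (2*s - m) m (by omega) x hx
  have hc1 : (1:ℝ) ≤ (2*(s:ℝ)+2)^2 := by nlinarith [Nat.cast_nonneg (α := ℝ) s]
  set A := M * ((2*(s:ℝ)+2)^2)^s with hA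
  have hA0 : 0 ≤ A := by positivity
  have hbd : ∀ k m, m + 2*k ≤ 2*s → ∀ x ∈ Set.Ioc (0:ℝ) 1,
      |HT f k m x| ≤ A * x ^ (2*s - m) := by
    intro k m hm x hx
    have hk : k ≤ s := by omega
    have hx2 := HT_bound s f hs1 M hM0 hb0 k m hm x hx
    have hpow : ((2*(s:ℝ)+2)^2)^k ≤ ((2*(s:ℝ)+2)^2)^s := pow_le_pow_right₀ hc1 hk
    have hxp : (0:ℝ) ≤ x ^ (2*s - m) := pow_nonneg hx.1.le _
    calc |HT f k m x| ≤ (M * ((2*(s:ℝ)+2)^2)^k) * x ^ (2*s - m) := hx2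
      _ ≤ A * x ^ (2*s - m) := by
          rw [hA]
          apply mul_le_mul_of_nonneg_right ?_ hxp
          exact mul_le_mul_of_nonneg_left hpow hM0
  set C := 9 * A + 1 with hC
  refine ⟨C, by positivity, ?_⟩
  intro l hl0 hJl
  have hl : 1 < l := by
    by_contra h
    push_neg at h
    have := J0_lower l (abs_le.mpr ⟨by linarith, h⟩)
    rw [hJl] at this
    linarith
  have hder := HT_deriv s f hdiff
  have hone := HT_one s f hs1 h1
  have hcont := HT_cont s f hdiff
  have hmeas := HT_meas s f hs1 hdiff
  have hchain : ∀ k, k ≤ s →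
      (∫ x in Set.Ioc (0:ℝ) 1, (HT f k 0 x / x^(2*k)) * J0 (l*x) * x)
        = (-(l^2))^k * ∫ x in Set.Ioc (0:ℝ) 1, f x * J0 (l*x) * x := by
    intro k
    induction k with
    | zero =>
        intro _
        simp only [pow_zero, one_mul, Nat.mul_zero, div_one]
        apply setIntegral_congr_fun measurableSet_Ioc
        intro x _
        rw [HT_zero, iteratedDeriv_zero]
    | succ k ih =>
        intro hk1
        rw [ibp_step s f hs1 hder hone hcont hmeas A hA0 hbd l hl hJl k hk1, ih (by omega)]
        ring
  have hIs := hchain s (le_refl s)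
  set I0 := ∫ x in Set.Ioc (0:ℝ) 1, f x * J0 (l*x) * x with hI0
  have hsl : (0:ℝ) < Real.sqrt l := Real.sqrt_pos.mpr (lt_trans one_pos hl)
  -- bound on the s-th integral
  have hIsb : |∫ x in Set.Ioc (0:ℝ) 1, (HT f s 0 x / x^(2*s)) * J0 (l*x) * x|
      ≤ 2*A/Real.sqrt l := by
    have hb : ∀ x ∈ Set.Ioc (0:ℝ) 1,
        ‖(HT f s 0 x / x^(2*s)) * J0 (l*x) * x‖ ≤ 2*A/Real.sqrt l := by
      intro x hx
      have hx0 : (0:ℝ) < x := hx.1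
      have hx1 : x ≤ 1 := hx.2
      have hlx : (0:ℝ) < l*x := by positivity
      have hHb := hbd s 0 (by omega) x hx
      rw [Nat.sub_zero] at hHb
      have hdivb : |HT f s 0 x / x^(2*s)| ≤ A := by
        rw [abs_div, abs_of_pos (pow_pos hx0 _), div_le_iff₀ (pow_pos hx0 _)]
        calc |HT f s 0 x| ≤ A * x^(2*s) := hHb
          _ = A * x^(2*s) := rfl
      have hJb := J0_decay (l*x) hlx
      have hsx : (0:ℝ) < Real.sqrt x := Real.sqrt_pos.mpr hx0
      have hxs : x ≤ Real.sqrt x := by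
        calc x = Real.sqrt (x^2) := (Real.sqrt_sq hx0.le).symm
          _ ≤ Real.sqrt x := Real.sqrt_le_sqrt (by nlinarith)
      have hstep : (2 / Real.sqrt (l*x)) * x ≤ 2 / Real.sqrt l := by
        rw [Real.sqrt_mul (by positivity : (0:ℝ) ≤ l)]
        rw [div_mul_eq_mul_div, div_le_div_iff₀ (by positivity) hsl]
        calc 2 * x * Real.sqrt l ≤ 2 * Real.sqrt x * Real.sqrt l := by nlinarith
          _ = 2 * (Real.sqrt l * Real.sqrt x) := by ring
      rw [Real.norm_eq_abs, abs_mul, abs_mul, abs_of_pos hx0]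
      calc |HT f s 0 x / x^(2*s)| * |J0 (l*x)| * x
          ≤ A * ((2 / Real.sqrt (l*x)) * x) := by
            have h1 : |HT f s 0 x / x^(2*s)| * |J0 (l*x)| ≤ A * (2 / Real.sqrt (l*x)) :=
              mul_le_mul hdivb hJb (abs_nonneg _) hA0
            calc |HT f s 0 x / x^(2*s)| * |J0 (l*x)| * x ≤ A * (2 / Real.sqrt (l*x)) * x :=
                  mul_le_mul_of_nonneg_right h1 hx0.le
              _ = A * ((2 / Real.sqrt (l*x)) * x) := by ring
        _ ≤ A * (2 / Real.sqrt l) := mul_le_mul_of_nonneg_left hstep hA0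
        _ = 2*A/Real.sqrt l := by ring
    have := norm_setIntegral_le_of_norm_le_const (μ := volume) (s := Set.Ioc (0:ℝ) 1)
      (C := 2*A/Real.sqrt l) measure_Ioc_lt_top hb
    rw [Real.volume_real_Ioc] at this
    simpa using this
  -- bound |I0|
  have habsIs : |(-(l^2))^s * I0| = (l^2)^s * |I0| := by
    rw [abs_mul, abs_pow, abs_neg, abs_of_pos (by positivity : (0:ℝ) < l^2)]
  have hI0b : |I0| ≤ (2*A/Real.sqrt l) / (l^2)^s := by
    rw [le_div_iff₀ (by positivity : (0:ℝ) < (l^2)^s)]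
    calc |I0| * (l^2)^s = (l^2)^s * |I0| := by ring
      _ = |(-(l^2))^s * I0| := habsIs.symm
      _ = |∫ x in Set.Ioc (0:ℝ) 1, (HT f s 0 x / x^(2*s)) * J0 (l*x) * x| := by rw [hIs]
      _ ≤ 2*A/Real.sqrt l := hIsb
  -- J1 lower bound
  have hJ1l := J1_sq_lower l hl hJl
  have hJ1pos : (0:ℝ) < (J1 l)^2 := by nlinarith
  have hJinv : 2 / (J1 l)^2 ≤ 9*l/2 := by
    rw [div_le_div_iff₀ hJ1pos (by norm_num : (0:ℝ) < 2)]
    nlinarith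
  -- assemble
  rw [MeasureTheory.integral_Icc_eq_integral_Ioc]
  have hLHS : |(2 / (J1 l)^2) * I0| = (2/(J1 l)^2) * |I0| := by
    rw [abs_mul, abs_of_pos (by positivity : (0:ℝ) < 2/(J1 l)^2)]
  rw [← hI0, hLHS]
  have hmain : (2/(J1 l)^2) * |I0| ≤ (9*l/2) * ((2*A/Real.sqrt l) / (l^2)^s) := by
    apply mul_le_mul hJinv hI0b (abs_nonneg _) (by positivity)
  refine le_trans hmain ?_
  -- rewrite the rpow
  have hl0' : (0:ℝ) < l := lt_trans one_pos hl
  have hrpow : l ^ ((2*s:ℝ) - 1/2) = l^(2*s) / Real.sqrt l := by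
    rw [Real.rpow_sub hl0']
    congr 1
    · rw [show ((2*s:ℝ)) = ((2*s : ℕ) : ℝ) by push_cast; ring, Real.rpow_natCast]
    · rw [Real.sqrt_eq_rpow]
  rw [hrpow]
  have hp : (l^2)^s = l^(2*s) := by rw [← pow_mul]
  rw [hp]
  have hCge : 9*A ≤ C := by rw [hC]; linarith
  have heq2 : 9*l/2 * (2*A/Real.sqrt l / l^(2*s)) = 9*A*Real.sqrt l / l^(2*s) := by
    have h3 : 9*l/2 * (2*A/Real.sqrt l / l^(2*s)) = 9*A*(l/Real.sqrt l) / l^(2*s) := by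
      ring
    rw [h3, Real.div_sqrt]
  rw [heq2, div_div_eq_mul_div]
  apply div_le_div_of_nonneg_right ?_ (by positivity : (0:ℝ) ≤ l^(2*s))
  exact mul_le_mul_of_nonneg_right hCge hsl.le
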